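/- If every set of at most 2s columns of D ∈ ℝ^{n×m} is linearly independent (i.e., 2s < σ(D)), then any two vectors γ₁, γ₂ with ‖γ₁‖₀ ≤ s, ‖γ₂‖₀ ≤ s, and Dγ₁ = Dγ₂ must be equal. -/

import Mathlib

/-- The ℓ₀ "norm": number of nonzero entries. -/
noncomputable def l0 {m : ℕ} (γ : Fin m → ℝ) : ℕ := {i | γ i ≠ 0}.ncard

open Matrix

theorem Matrix.eq_zero_of_mulVec_eq_zero_of_linearIndependent_cols {ι κ R : Type*} [Fintype κ]
    [CommRing R] {D : Matrix ι κ R} {v : κ → R} (t : Finset κ) (hsupp : Function.support v ⊆ t)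
    (hli : LinearIndependent R (fun j : t => fun i => D i j)) (hv : D *ᵥ v = 0) : v = 0 := by
  have hsum : ∑ j : t, v j • (fun i => D i j) = 0 := by
    rw [Finset.sum_coe_sort t (fun j => v j • fun i => D i j),
      Finset.sum_subset (Finset.subset_univ t) fun j _ hj => ?_, ← hv, mulVec_eq_sum]
    · simp only [op_smul_eq_smul]
      rfl
    · rw [Function.notMem_support.mp fun h => hj (hsupp h), zero_smul]
  funext j
  by_cases hj : j ∈ t
  · exact Fintype.linearIndependent_iff.mp hli (fun j => v j) hsum ⟨j, hj⟩
  · exact Function.notMem_support.mp fun h => hj (hsupp h)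

theorem l0_eq_card_toFinset_support {m : ℕ} (γ : Fin m → ℝ) :
    l0 γ = (Set.toFinite (Function.support γ)).toFinset.card :=
  Set.ncard_eq_toFinset_card _

theorem l0_sub_le {m : ℕ} (γ₁ γ₂ : Fin m → ℝ) : l0 (γ₁ - γ₂) ≤ l0 γ₁ + l0 γ₂ :=
  (Set.ncard_le_ncard (Function.support_sub γ₁ γ₂) (Set.toFinite _)).trans
    (Set.ncard_union_le _ _)

/-- If every set of at most 2s columns of D is linearly independent, then any two
s-sparse vectors with the same image under D are equal. -/
theorem stmt2 {n m : ℕ} (D : Matrix (Fin n) (Fin m) ℝ) (s : ℕ)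
    (hind : ∀ t : Finset (Fin m), t.card ≤ 2 * s →
      LinearIndependent ℝ (fun j : {x // x ∈ t} => fun i => D i j.1))
    (γ₁ γ₂ : Fin m → ℝ) (h₁ : l0 γ₁ ≤ s) (h₂ : l0 γ₂ ≤ s)
    (heq : D.mulVec γ₁ = D.mulVec γ₂) : γ₁ = γ₂ := by
  set t := (Set.toFinite (Function.support (γ₁ - γ₂))).toFinset
  have ht : t.card ≤ 2 * s := by
    rw [← l0_eq_card_toFinset_support]
    linarith [l0_sub_le γ₁ γ₂]
  have hzero : D *ᵥ (γ₁ - γ₂) = 0 := by rw [mulVec_sub, heq, sub_self]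
  exact sub_eq_zero.mp <| eq_zero_of_mulVec_eq_zero_of_linearIndependent_cols t
    (Set.Finite.coe_toFinset _).ge (hind t ht) hzero
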